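/- arXiv:1311.2891 — 2 statements merged into one kernel-verified Lean document; each statement's English description precedes it below -/
import Mathlib

section
/- Let n ≥ 2, let σ > 0, let M₁,…,Mₙ ∈ ℝ be fixed, and let u ∈ ℝ^{C(n,2)} be a vector indexed by pairs 1 ≤ i < j ≤ n with Σ_{i<j} u_{ij}² = 1. Let N₁,…,Nₙ be independent Gaussian random variables with mean 0 and variance σ². Then the random variable P = Σ_{1 ≤ i < j ≤ n} u_{ij}(M_i + N_i)(M_j + N_j) satisfies Var(P) ≥ σ⁴. -/
open MeasureTheory ProbabilityTheory Real Set
open scoped NNReal ENNReal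

section OneDim

lemma gauss_pdf_eq {v : ℝ≥0} (x : ℝ) :
    gaussianPDFReal 0 v x = (√(2 * π * v))⁻¹ * rexp (-((2 * (v:ℝ))⁻¹) * x ^ 2) := by
  rw [gaussianPDFReal, sub_zero]
  congr 1
  rw [neg_div, neg_mul]
  congr 1
  rw [div_eq_inv_mul]

lemma gauss_integral_eq {v : ℝ≥0} (hv : v ≠ 0) (g : ℝ → ℝ) :
    ∫ y, g y ∂(gaussianReal 0 v) = ∫ x, gaussianPDFReal 0 v x * g x := by
  rw [gaussianReal_of_var_ne_zero _ hv]
  have h : (gaussianPDF 0 v) = fun x => ((fun x => (gaussianPDFReal 0 v x).toNNReal) x : ℝ≥0∞) := rfl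
  rw [h, integral_withDensity_eq_integral_smul
    ((measurable_gaussianPDFReal 0 v).real_toNNReal) g]
  congr 1 with x
  simp [NNReal.smul_def, Real.coe_toNNReal _ (gaussianPDFReal_nonneg 0 v x), smul_eq_mul]

lemma gauss_integrable_iff {v : ℝ≥0} (hv : v ≠ 0) (g : ℝ → ℝ) :
    Integrable g (gaussianReal 0 v) ↔
      Integrable (fun x => gaussianPDFReal 0 v x * g x) volume := by
  rw [gaussianReal_of_var_ne_zero _ hv]
  have h : (gaussianPDF 0 v) = fun x => ((fun x => (gaussianPDFReal 0 v x).toNNReal) x : ℝ≥0∞) := rfl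
  rw [h, integrable_withDensity_iff_integrable_smul
    ((measurable_gaussianPDFReal 0 v).real_toNNReal)]
  constructor <;> intro h' <;> refine h'.congr (Filter.Eventually.of_forall fun x => ?_) <;>
    simp [NNReal.smul_def, Real.coe_toNNReal _ (gaussianPDFReal_nonneg 0 v x), smul_eq_mul]

end OneDim

lemma split_integral {g : ℝ → ℝ} (hg : Integrable g volume) :
    ∫ x, g x = (∫ x in Ioi (0:ℝ), g (-x)) + ∫ x in Ioi (0:ℝ), g x := by
  have h := integral_add_compl (measurableSet_Iic (a := (0:ℝ))) hg
  rw [compl_Iic] at h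
  rw [← h]
  congr 1
  rw [integral_comp_neg_Ioi, neg_zero]

lemma K1 {b : ℝ} (hb : 0 < b) : ∫ x : ℝ, x * rexp (-b * x ^ 2) = 0 := by
  rw [split_integral (integrable_mul_exp_neg_mul_sq hb)]
  have : ∀ x : ℝ, -x * rexp (-b * (-x) ^ 2) = -(x * rexp (-b * x ^ 2)) := by
    intro x; rw [neg_sq]; ring
  simp only [this, integral_neg]
  ring

lemma K2 {b : ℝ} (hb : 0 < b) :
    ∫ x : ℝ, x ^ 2 * rexp (-b * x ^ 2) = √(π / b) / (2 * b) := by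
  have hint : Integrable (fun x : ℝ => x ^ 2 * rexp (-b * x ^ 2)) volume := by
    have := integrable_rpow_mul_exp_neg_mul_sq hb (s := 2) (by norm_num)
    refine this.congr (Filter.Eventually.of_forall fun x => ?_)
    show x ^ (2:ℝ) * rexp (-b * x ^ 2) = x ^ (2:ℕ) * rexp (-b * x ^ 2)
    norm_cast
  rw [split_integral hint]
  simp only [neg_sq]
  rw [← two_mul]
  have hIoi : ∫ x in Ioi (0:ℝ), x ^ 2 * rexp (-b * x ^ 2)
      = b ^ (-(2 + 1) / 2 : ℝ) * (1 / 2) * Gamma ((2 + 1) / 2) := by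
    rw [← integral_rpow_mul_exp_neg_mul_rpow (by norm_num) (by norm_num) hb]
    refine setIntegral_congr_fun measurableSet_Ioi (fun x _ => ?_)
    show x ^ (2:ℕ) * rexp (-b * x ^ (2:ℕ)) = x ^ (2:ℝ) * rexp (-b * x ^ (2:ℝ))
    norm_cast
  rw [hIoi]
  have hG : Gamma ((2 + 1) / 2 : ℝ) = (1 / 2) * √π := by
    rw [show ((2 + 1) / 2 : ℝ) = 1 / 2 + 1 by norm_num, Gamma_add_one (by norm_num),
      Gamma_one_half_eq]
  rw [hG]
  have h1 : (b : ℝ) ^ (-(2 + 1) / 2 : ℝ) = (√b)⁻¹ * b⁻¹ := by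
    rw [show (-(2 + 1) / 2 : ℝ) = (-(1/2)) + (-1) by norm_num, Real.rpow_add hb,
      Real.rpow_neg_one, Real.rpow_neg hb.le, ← Real.sqrt_eq_rpow]
  rw [h1, Real.sqrt_div pi_pos.le b, div_div]
  rw [eq_div_iff (by positivity)]
  have hsb : √b ≠ 0 := by positivity
  field_simp


section Moments
variable {v : ℝ≥0} (hv : v ≠ 0)

lemma hv_pos (hv : v ≠ 0) : (0:ℝ) < v := by positivity

lemma gauss_pdf_form (hv : v ≠ 0) : (fun x => gaussianPDFReal 0 v x)
    = fun x => (√(2 * π * v))⁻¹ * rexp (-((2 * (v:ℝ))⁻¹) * x ^ 2) :=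
  funext fun x => gauss_pdf_eq x

lemma hb_pos (hv : v ≠ 0) : (0:ℝ) < (2 * (v:ℝ))⁻¹ := by
  have := hv_pos hv; positivity

lemma gauss_moment_one (hv : v ≠ 0) : ∫ y, y ∂(gaussianReal 0 v) = 0 := by
  rw [gauss_integral_eq hv]
  calc ∫ x, gaussianPDFReal 0 v x * x
      = ∫ x, (√(2 * π * v))⁻¹ * (x * rexp (-((2 * (v:ℝ))⁻¹) * x ^ 2)) := by
        congr 1 with x; rw [gauss_pdf_eq]; ring
    _ = (√(2 * π * v))⁻¹ * ∫ x, x * rexp (-((2 * (v:ℝ))⁻¹) * x ^ 2) := MeasureTheory.integral_const_mul _ _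
    _ = 0 := by rw [K1 (hb_pos hv)]; ring

lemma gauss_moment_two (hv : v ≠ 0) : ∫ y, y ^ 2 ∂(gaussianReal 0 v) = v := by
  rw [gauss_integral_eq hv]
  have hb := hb_pos hv
  have hvp := hv_pos hv
  calc ∫ x, gaussianPDFReal 0 v x * x ^ 2
      = ∫ x, (√(2 * π * v))⁻¹ * (x ^ 2 * rexp (-((2 * (v:ℝ))⁻¹) * x ^ 2)) := by
        congr 1 with x; rw [gauss_pdf_eq]; ring
    _ = (√(2 * π * v))⁻¹ * ∫ x, x ^ 2 * rexp (-((2 * (v:ℝ))⁻¹) * x ^ 2) :=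
        MeasureTheory.integral_const_mul _ _
    _ = (√(2 * π * v))⁻¹ * (√(π / (2 * (v:ℝ))⁻¹) / (2 * (2 * (v:ℝ))⁻¹)) := by
        rw [K2 hb]
    _ = v := by
        have h1 : π / (2 * (v:ℝ))⁻¹ = 2 * π * v := by
          field_simp
        rw [h1]
        have hs : √(2 * π * (v:ℝ)) ≠ 0 := by positivity
        field_simp

lemma gauss_integrable_poly (hv : v ≠ 0) (a b c : ℝ) :
    Integrable (fun y => a + b * y + c * y ^ 2) (gaussianReal 0 v) := by
  rw [gauss_integrable_iff hv]
  have hb' := hb_pos hv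
  have e1 : Integrable (fun x : ℝ => rexp (-((2 * (v:ℝ))⁻¹) * x ^ 2)) volume :=
    integrable_exp_neg_mul_sq hb'
  have e2 : Integrable (fun x : ℝ => x * rexp (-((2 * (v:ℝ))⁻¹) * x ^ 2)) volume :=
    integrable_mul_exp_neg_mul_sq hb'
  have e3 : Integrable (fun x : ℝ => x ^ 2 * rexp (-((2 * (v:ℝ))⁻¹) * x ^ 2)) volume := by
    have := integrable_rpow_mul_exp_neg_mul_sq hb' (s := 2) (by norm_num)
    refine this.congr (Filter.Eventually.of_forall fun x => ?_)
    show x ^ (2:ℝ) * rexp (-((2 * (v:ℝ))⁻¹) * x ^ 2) = x ^ (2:ℕ) * rexp (-((2 * (v:ℝ))⁻¹) * x ^ 2)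
    norm_cast
  have : (fun x => gaussianPDFReal 0 v x * (a + b * x + c * x ^ 2))
      = fun x => (√(2 * π * v))⁻¹ *
        (a * rexp (-((2 * (v:ℝ))⁻¹) * x ^ 2) + b * (x * rexp (-((2 * (v:ℝ))⁻¹) * x ^ 2))
          + c * (x ^ 2 * rexp (-((2 * (v:ℝ))⁻¹) * x ^ 2))) := by
    funext x; rw [gauss_pdf_eq]; ring
  rw [this]
  exact (((e1.const_mul a).add (e2.const_mul b)).add (e3.const_mul c)).const_mul _

end Moments

section G
variable {v : ℝ≥0}

/-- `∫ (m+y)^e` against the gaussian. -/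
noncomputable def Gm (v : ℝ≥0) (m : ℝ) (e : ℕ) : ℝ := ∫ y, (m + y) ^ e ∂(gaussianReal 0 v)

lemma integrable_Gm (hv : v ≠ 0) (m : ℝ) {e : ℕ} (he : e ≤ 2) :
    Integrable (fun y => (m + y) ^ e) (gaussianReal 0 v) := by
  interval_cases e
  · simpa using gauss_integrable_poly hv 1 0 0
  · have := gauss_integrable_poly hv m 1 0
    refine this.congr (Filter.Eventually.of_forall fun y => ?_); simp
  · have := gauss_integrable_poly hv (m^2) (2*m) 1
    refine this.congr (Filter.Eventually.of_forall fun y => ?_); simp; ring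

lemma Gm_zero (m : ℝ) : Gm v m 0 = 1 := by simp [Gm]

lemma Gm_one (hv : v ≠ 0) (m : ℝ) : Gm v m 1 = m := by
  have h1 : Integrable (fun y : ℝ => y) (gaussianReal 0 v) := by
    have := gauss_integrable_poly hv 0 1 0
    refine this.congr (Filter.Eventually.of_forall fun y => ?_); simp
  simp only [Gm, pow_one]
  rw [integral_add (integrable_const m) h1, gauss_moment_one hv]
  simp

lemma Gm_two (hv : v ≠ 0) (m : ℝ) : Gm v m 2 = m ^ 2 + v := by
  have h1 : Integrable (fun y : ℝ => y) (gaussianReal 0 v) := by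
    have := gauss_integrable_poly hv 0 1 0
    refine this.congr (Filter.Eventually.of_forall fun y => ?_); simp
  have h2 : Integrable (fun y : ℝ => y ^ 2) (gaussianReal 0 v) := by
    have := gauss_integrable_poly hv 0 0 1
    refine this.congr (Filter.Eventually.of_forall fun y => ?_); simp
  have : (fun y : ℝ => (m + y) ^ 2) = fun y => (m ^ 2 + (2 * m) * y) + y ^ 2 := by
    funext y; ring
  simp only [Gm]
  have hA : Integrable (fun y : ℝ => m ^ 2 + 2 * m * y) (gaussianReal 0 v) := by
    have := gauss_integrable_poly hv (m^2) (2*m) 0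
    refine this.congr (Filter.Eventually.of_forall fun y => ?_); simp
  rw [this, integral_add (f := fun y : ℝ => m ^ 2 + 2 * m * y) (g := fun y : ℝ => y ^ 2) hA h2,
    integral_add (f := fun _ : ℝ => m ^ 2) (g := fun y : ℝ => 2 * m * y)
      (integrable_const (m^2)) (h1.const_mul (2*m)),
    MeasureTheory.integral_const_mul, gauss_moment_one hv, gauss_moment_two hv]
  simp

end G

section Pi
variable {n : ℕ} {v : ℝ≥0}

lemma pi_integrable (μ : Measure ℝ) [SigmaFinite μ] (f : Fin n → ℝ → ℝ)
    (hf : ∀ i, Integrable (f i) μ) :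
    Integrable (fun x : Fin n → ℝ => ∏ i, f i (x i)) (Measure.pi fun _ => μ) := by
  letI : MeasureSpace ℝ := ⟨μ⟩
  haveI : SigmaFinite (volume : Measure ℝ) := ‹SigmaFinite μ›
  exact Integrable.fintype_prod hf

lemma pi_integral (μ : Measure ℝ) [SigmaFinite μ] (f : Fin n → ℝ → ℝ) :
    ∫ x, ∏ i, f i (x i) ∂(Measure.pi fun _ => μ) = ∏ i, ∫ y, f i y ∂μ := by
  letI : MeasureSpace ℝ := ⟨μ⟩
  haveI : SigmaFinite (volume : Measure ℝ) := ‹SigmaFinite μ›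
  exact integral_fintype_prod_eq_prod (μ := fun _ => μ) f

end Pi

section Quad
variable {n : ℕ} {v : ℝ≥0}

/-- exponent vector of the 4-fold product -/
def E4 (a b c d : Fin n) (t : Fin n) : ℕ :=
  ((if t = a then 1 else 0) + (if t = b then 1 else 0)) +
    ((if t = c then 1 else 0) + (if t = d then 1 else 0))

lemma E4_le_two {a b c d : Fin n} (hab : a ≠ b) (hcd : c ≠ d) (t : Fin n) :
    E4 a b c d t ≤ 2 := by
  have h1 : (if t = a then 1 else 0) + (if t = b then 1 else 0) ≤ 1 := by
    by_cases h : t = a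
    · subst h; rw [if_neg hab, if_pos rfl]
    · rw [if_neg h]; split <;> norm_num
  have h2 : (if t = c then 1 else 0) + (if t = d then 1 else 0) ≤ 1 := by
    by_cases h : t = c
    · subst h; rw [if_neg hcd, if_pos rfl]
    · rw [if_neg h]; split <;> norm_num
  calc E4 a b c d t ≤ 1 + 1 := add_le_add h1 h2
    _ = 2 := rfl

lemma prod_pow_ind (f : Fin n → ℝ) (a : Fin n) :
    ∏ t, f t ^ (if t = a then 1 else 0) = f a := by
  have : ∀ t, f t ^ (if t = a then 1 else 0) = (if t = a then f t else 1) := by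
    intro t; split <;> simp
  rw [Finset.prod_congr rfl (fun t _ => this t), Finset.prod_ite_eq' Finset.univ a f,
    if_pos (Finset.mem_univ a)]

lemma quad_eq_prod (M : Fin n → ℝ) (a b c d : Fin n) (x : Fin n → ℝ) :
    (M a + x a) * (M b + x b) * ((M c + x c) * (M d + x d)) =
      ∏ t, (M t + x t) ^ (E4 a b c d t) := by
  simp only [E4, pow_add, Finset.prod_mul_distrib, prod_pow_ind (fun t => M t + x t)]

lemma pair_eq_prod (M : Fin n → ℝ) (a b : Fin n) (x : Fin n → ℝ) :
    (M a + x a) * (M b + x b) =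
      ∏ t, (M t + x t) ^ ((if t = a then 1 else 0) + (if t = b then 1 else 0)) := by
  simp only [pow_add, Finset.prod_mul_distrib, prod_pow_ind (fun t => M t + x t)]

lemma integ_quad (hv : v ≠ 0) (M : Fin n → ℝ) {a b c d : Fin n} (hab : a ≠ b) (hcd : c ≠ d) :
    Integrable (fun x : Fin n → ℝ => (M a + x a) * (M b + x b) * ((M c + x c) * (M d + x d)))
      (Measure.pi fun _ => gaussianReal 0 v) := by
  have : (fun x : Fin n → ℝ => (M a + x a) * (M b + x b) * ((M c + x c) * (M d + x d)))
      = fun x => ∏ t, (fun t y => (M t + y) ^ (E4 a b c d t)) t (x t) := by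
    funext x; exact quad_eq_prod M a b c d x
  rw [this]
  exact pi_integrable _ _ (fun t => integrable_Gm hv _ (E4_le_two hab hcd t))

lemma int_quad (hv : v ≠ 0) (M : Fin n → ℝ) (a b c d : Fin n) :
    ∫ x, (M a + x a) * (M b + x b) * ((M c + x c) * (M d + x d))
        ∂(Measure.pi fun _ => gaussianReal 0 v)
      = ∏ t, Gm v (M t) (E4 a b c d t) := by
  have : (fun x : Fin n → ℝ => (M a + x a) * (M b + x b) * ((M c + x c) * (M d + x d)))
      = fun x => ∏ t, (fun t y => (M t + y) ^ (E4 a b c d t)) t (x t) := by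
    funext x; exact quad_eq_prod M a b c d x
  rw [this, pi_integral (gaussianReal 0 v) (fun t y => (M t + y) ^ (E4 a b c d t))]
  rfl

lemma integ_pair (hv : v ≠ 0) (M : Fin n → ℝ) (a b : Fin n) (hab : a ≠ b) :
    Integrable (fun x : Fin n → ℝ => (M a + x a) * (M b + x b))
      (Measure.pi fun _ => gaussianReal 0 v) := by
  have : (fun x : Fin n → ℝ => (M a + x a) * (M b + x b))
      = fun x => ∏ t, (fun t y => (M t + y) ^ ((if t = a then 1 else 0) + (if t = b then 1 else 0))) t (x t) := by
    funext x; exact pair_eq_prod M a b x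
  rw [this]
  refine pi_integrable _ _ (fun t => integrable_Gm hv _ ?_)
  split_ifs <;> norm_num

lemma int_pair (hv : v ≠ 0) (M : Fin n → ℝ) (a b : Fin n) (hab : a ≠ b) :
    ∫ x, (M a + x a) * (M b + x b) ∂(Measure.pi fun _ => gaussianReal 0 v) = M a * M b := by
  have : (fun x : Fin n → ℝ => (M a + x a) * (M b + x b))
      = fun x => ∏ t, (fun t y => (M t + y) ^ ((if t = a then 1 else 0) + (if t = b then 1 else 0))) t (x t) := by
    funext x; exact pair_eq_prod M a b x
  rw [this, pi_integral (gaussianReal 0 v)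
    (fun t y => (M t + y) ^ ((if t = a then 1 else 0) + (if t = b then 1 else 0)))]
  have heq : ∀ t, (∫ y, (M t + y) ^ ((if t = a then 1 else 0) + (if t = b then 1 else 0)) ∂(gaussianReal 0 v))
      = (if t = a then M t else 1) * (if t = b then M t else 1) := by
    intro t
    by_cases h1 : t = a
    · subst h1
      rw [if_neg hab, if_pos rfl, if_pos rfl, if_neg hab]
      have h := Gm_one hv (M t); rw [Gm] at h; simpa using h
    · rw [if_neg h1, if_neg h1]
      by_cases h2 : t = b
      · subst h2
        rw [if_pos rfl, if_pos rfl]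
        have h := Gm_one hv (M t); rw [Gm] at h; simpa using h
      · rw [if_neg h2, if_neg h2]
        have h := Gm_zero (v := v) (M t); rw [Gm] at h; simpa using h
  rw [Finset.prod_congr rfl (fun t _ => heq t), Finset.prod_mul_distrib,
    Finset.prod_ite_eq' Finset.univ a M, Finset.prod_ite_eq' Finset.univ b M,
    if_pos (Finset.mem_univ a), if_pos (Finset.mem_univ b)]

end Quad

section Branches
variable {n : ℕ} {v : ℝ≥0}

lemma prod_ite_fac (F : Fin n → ℝ) (a : Fin n) :
    ∏ t, (if t = a then F t else 1) = F a := by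
  rw [Finset.prod_ite_eq' Finset.univ a F, if_pos (Finset.mem_univ a)]

lemma B1 (hv : v ≠ 0) (M : Fin n → ℝ) {a b : Fin n} (hab : a ≠ b) :
    ∏ t, Gm v (M t) (E4 a b a b t) = (M a ^ 2 + v) * (M b ^ 2 + v) := by
  have hpt : ∀ t, Gm v (M t) (E4 a b a b t)
      = (if t = a then M t ^ 2 + (v:ℝ) else 1) * (if t = b then M t ^ 2 + (v:ℝ) else 1) := by
    intro t
    by_cases h1 : t = a
    · subst h1; simp [E4, hab, Gm_two hv]
    · by_cases h2 : t = b
      · subst h2; simp [E4, h1, Gm_two hv]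
      · simp [E4, h1, h2, Gm_zero]
  rw [Finset.prod_congr rfl (fun t _ => hpt t), Finset.prod_mul_distrib,
    prod_ite_fac, prod_ite_fac]

lemma B2 (hv : v ≠ 0) (M : Fin n → ℝ) {a b d : Fin n} (hab : a ≠ b) (had : a ≠ d)
    (hbd : b ≠ d) :
    ∏ t, Gm v (M t) (E4 a b a d t) = (M a ^ 2 + v) * (M b * M d) := by
  have hpt : ∀ t, Gm v (M t) (E4 a b a d t)
      = (if t = a then M t ^ 2 + (v:ℝ) else 1) * ((if t = b then M t else 1) * (if t = d then M t else 1)) := by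
    intro t
    by_cases h1 : t = a
    · subst h1; simp [E4, hab, had, Gm_two hv]
    · by_cases h2 : t = b
      · subst h2; simp [E4, h1, hbd, Gm_one hv]
      · by_cases h3 : t = d
        · subst h3; simp [E4, h1, h2, Gm_one hv]
        · simp [E4, h1, h2, h3, Gm_zero]
  rw [Finset.prod_congr rfl (fun t _ => hpt t), Finset.prod_mul_distrib,
    Finset.prod_mul_distrib, prod_ite_fac, prod_ite_fac, prod_ite_fac]

lemma B3 (hv : v ≠ 0) (M : Fin n → ℝ) {a b c : Fin n} (hab : a ≠ b) (hac : a ≠ c)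
    (hbc : b ≠ c) :
    ∏ t, Gm v (M t) (E4 a b c a t) = (M a ^ 2 + v) * (M b * M c) := by
  have hpt : ∀ t, Gm v (M t) (E4 a b c a t)
      = (if t = a then M t ^ 2 + (v:ℝ) else 1) * ((if t = b then M t else 1) * (if t = c then M t else 1)) := by
    intro t
    by_cases h1 : t = a
    · subst h1; simp [E4, hab, hac, Gm_two hv]
    · by_cases h2 : t = b
      · subst h2; simp [E4, h1, hbc, Gm_one hv]
      · by_cases h3 : t = c
        · subst h3; simp [E4, h1, h2, Gm_one hv]
        · simp [E4, h1, h2, h3, Gm_zero]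
  rw [Finset.prod_congr rfl (fun t _ => hpt t), Finset.prod_mul_distrib,
    Finset.prod_mul_distrib, prod_ite_fac, prod_ite_fac, prod_ite_fac]

lemma B4 (hv : v ≠ 0) (M : Fin n → ℝ) {a b d : Fin n} (hab : a ≠ b) (had : a ≠ d)
    (hbd : b ≠ d) :
    ∏ t, Gm v (M t) (E4 a b b d t) = (M b ^ 2 + v) * (M a * M d) := by
  have hpt : ∀ t, Gm v (M t) (E4 a b b d t)
      = (if t = b then M t ^ 2 + (v:ℝ) else 1) * ((if t = a then M t else 1) * (if t = d then M t else 1)) := by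
    intro t
    by_cases h1 : t = b
    · subst h1; simp [E4, Ne.symm hab, hbd, Gm_two hv]
    · by_cases h2 : t = a
      · subst h2; simp [E4, h1, had, Gm_one hv]
      · by_cases h3 : t = d
        · subst h3; simp [E4, h1, h2, Gm_one hv]
        · simp [E4, h1, h2, h3, Gm_zero]
  rw [Finset.prod_congr rfl (fun t _ => hpt t), Finset.prod_mul_distrib,
    Finset.prod_mul_distrib, prod_ite_fac, prod_ite_fac, prod_ite_fac]

lemma B5 (hv : v ≠ 0) (M : Fin n → ℝ) {a b c : Fin n} (hab : a ≠ b) (hac : a ≠ c)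
    (hbc : b ≠ c) :
    ∏ t, Gm v (M t) (E4 a b c b t) = (M b ^ 2 + v) * (M a * M c) := by
  have hpt : ∀ t, Gm v (M t) (E4 a b c b t)
      = (if t = b then M t ^ 2 + (v:ℝ) else 1) * ((if t = a then M t else 1) * (if t = c then M t else 1)) := by
    intro t
    by_cases h1 : t = b
    · subst h1; simp [E4, Ne.symm hab, hbc, Gm_two hv]
    · by_cases h2 : t = a
      · subst h2; simp [E4, h1, hac, Gm_one hv]
      · by_cases h3 : t = c
        · subst h3; simp [E4, h1, h2, Gm_one hv]
        · simp [E4, h1, h2, h3, Gm_zero]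
  rw [Finset.prod_congr rfl (fun t _ => hpt t), Finset.prod_mul_distrib,
    Finset.prod_mul_distrib, prod_ite_fac, prod_ite_fac, prod_ite_fac]

lemma B6 (hv : v ≠ 0) (M : Fin n → ℝ) {a b c d : Fin n} (hab : a ≠ b) (hac : a ≠ c)
    (had : a ≠ d) (hbc : b ≠ c) (hbd : b ≠ d) (hcd : c ≠ d) :
    ∏ t, Gm v (M t) (E4 a b c d t) = M a * M b * (M c * M d) := by
  have hpt : ∀ t, Gm v (M t) (E4 a b c d t)
      = (if t = a then M t else 1) * (if t = b then M t else 1) *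
        ((if t = c then M t else 1) * (if t = d then M t else 1)) := by
    intro t
    by_cases h1 : t = a
    · subst h1; simp [E4, hab, hac, had, Gm_one hv]
    · by_cases h2 : t = b
      · subst h2; simp [E4, h1, hbc, hbd, Gm_one hv]
      · by_cases h3 : t = c
        · subst h3; simp [E4, h1, h2, hcd, Gm_one hv]
        · by_cases h4 : t = d
          · subst h4; simp [E4, h1, h2, h3, Gm_one hv]
          · simp [E4, h1, h2, h3, h4, Gm_zero]
  rw [Finset.prod_congr rfl (fun t _ => hpt t), Finset.prod_mul_distrib,
    Finset.prod_mul_distrib, Finset.prod_mul_distrib,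
    prod_ite_fac, prod_ite_fac, prod_ite_fac, prod_ite_fac]

lemma sum_two_ite (f : Fin n → ℝ) {a b : Fin n} (hab : a ≠ b) (x y : ℝ) :
    ∑ t, (if a = t then x else if b = t then y else 0) * f t = x * f a + y * f b := by
  have hpt : ∀ t, (if a = t then x else if b = t then y else 0) * f t
      = (if a = t then x * f t else 0) + (if b = t then y * f t else 0) := by
    intro t
    by_cases h1 : a = t
    · rw [if_pos h1, if_pos h1, if_neg (fun h : b = t => hab (h1.trans h.symm))]
      ring
    · rw [if_neg h1, if_neg h1]
      by_cases h2 : b = t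
      · rw [if_pos h2, if_pos h2]; ring
      · rw [if_neg h2, if_neg h2]; ring
  rw [Finset.sum_congr rfl (fun t _ => hpt t), Finset.sum_add_distrib,
    Finset.sum_ite_eq Finset.univ a _, Finset.sum_ite_eq Finset.univ b _,
    if_pos (Finset.mem_univ a), if_pos (Finset.mem_univ b)]

end Branches

section Cov
variable {n : ℕ} {v : ℝ≥0}

lemma cov_eval (hv : v ≠ 0) (M : Fin n → ℝ) {a b c d : Fin n} (hab : a < b) (hcd : c < d) :
    (∏ t, Gm v (M t) (E4 a b c d t)) - (M a * M b) * (M c * M d)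
      = (v:ℝ) * (∑ t, (if a = t then M b else if b = t then M a else 0) *
          (if c = t then M d else if d = t then M c else 0))
        + (if a = c ∧ b = d then (v:ℝ)^2 else 0) := by
  have hab' : a ≠ b := hab.ne
  have hcd' : c ≠ d := hcd.ne
  rcases eq_or_ne a c with hac | hac
  · subst hac
    rcases eq_or_ne b d with hbd | hbd
    · subst hbd
      rw [B1 hv M hab',
        sum_two_ite (fun t => if a = t then M b else if b = t then M a else 0) hab' (M b) (M a)]
      simp only [if_pos rfl, if_neg (Ne.symm hab'), if_neg hab', and_self, if_true]
      ring
    · rw [B2 hv M hab' hcd' hbd,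
        sum_two_ite (fun t => if a = t then M d else if d = t then M a else 0) hab' (M b) (M a)]
      simp only [if_pos rfl, if_neg (Ne.symm hab'), if_neg hab',
        if_neg (show ¬ d = b from fun h => hbd h.symm),
        if_neg (show ¬ (a = a ∧ b = d) from fun h => hbd h.2)]
      simp only [if_true, true_and, if_neg hbd]
      ring
  · rcases eq_or_ne a d with had | had
    · subst had
      have hca : c ≠ a := hcd'
      have hcb : c ≠ b := (hcd.trans hab).ne
      rw [B3 hv M hab' (Ne.symm hca) (Ne.symm hcb),
        sum_two_ite (fun t => if c = t then M a else if a = t then M c else 0) hab' (M b) (M a)]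
      simp only [if_pos rfl, if_neg hca, if_neg hcb, if_neg (Ne.symm hab'),
        if_neg (show ¬ (a = c ∧ b = a) from fun h => hac h.1)]
      simp only [if_true, if_neg hab']
      ring
    · rcases eq_or_ne b c with hbc | hbc
      · subst hbc
        have hbd : b ≠ d := hcd'
        have had2 : a ≠ d := (hab.trans hcd).ne
        rw [B4 hv M hab' had2 hbd,
          sum_two_ite (fun t => if b = t then M d else if d = t then M b else 0) hab' (M b) (M a)]
        simp only [if_pos rfl, if_neg (Ne.symm hab'), if_neg (Ne.symm had2),
          if_neg (show ¬ (a = b ∧ b = d) from fun h => hab' h.1)]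
        simp only [if_true]
        ring
      · rcases eq_or_ne b d with hbd | hbd
        · subst hbd
          have hcb : c ≠ b := hcd'
          rw [B5 hv M hab' hac (Ne.symm hcb),
            sum_two_ite (fun t => if c = t then M b else if b = t then M c else 0) hab' (M b) (M a)]
          simp only [if_pos rfl, if_neg (Ne.symm hac), if_neg (Ne.symm hab'), if_neg hcb,
            if_neg (show ¬ (a = c ∧ b = b) from fun h => hac h.1)]
          simp only [if_true, and_true, if_neg hac]
          ring
        · rw [B6 hv M hab' hac had hbc hbd hcd',
            sum_two_ite (fun t => if c = t then M d else if d = t then M c else 0) hab' (M b) (M a)]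
          simp only [if_neg (Ne.symm hac), if_neg (Ne.symm had), if_neg (Ne.symm hbc),
            if_neg (show ¬ d = b from fun h => hbd h.symm),
            if_neg (show ¬ (a = c ∧ b = d) from fun h => hac h.1)]
          ring
end Cov

section Main
variable {n : ℕ}

noncomputable def Tfun (M : Fin n → ℝ) (u : {p : Fin n × Fin n // p.1 < p.2} → ℝ)
    (p : {p : Fin n × Fin n // p.1 < p.2}) : (Fin n → ℝ) → ℝ :=
  fun x => u p * ((M p.1.1 + x p.1.1) * (M p.1.2 + x p.1.2))

noncomputable def wgt (M : Fin n → ℝ) (u : {p : Fin n × Fin n // p.1 < p.2} → ℝ)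
    (t : Fin n) (p : {p : Fin n × Fin n // p.1 < p.2}) : ℝ :=
  u p * (if p.1.1 = t then M p.1.2 else if p.1.2 = t then M p.1.1 else 0)

lemma wgt_sum (M : Fin n → ℝ) (u : {p : Fin n × Fin n // p.1 < p.2} → ℝ)
    (p q : {p : Fin n × Fin n // p.1 < p.2}) :
    ∑ t, wgt M u t p * wgt M u t q
      = u p * u q * ∑ t, (if p.1.1 = t then M p.1.2 else if p.1.2 = t then M p.1.1 else 0) *
          (if q.1.1 = t then M q.1.2 else if q.1.2 = t then M q.1.1 else 0) := by
  rw [Finset.mul_sum]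
  exact Finset.sum_congr rfl fun t _ => by simp only [wgt]; ring

end Main

set_option maxHeartbeats 1000000 in
theorem variance_quadratic_gaussian_ge (n : ℕ) (hn : 2 ≤ n) (σ : ℝ) (hσ : 0 < σ)
    (M : Fin n → ℝ) (u : {p : Fin n × Fin n // p.1 < p.2} → ℝ)
    (hu : ∑ p, u p ^ 2 = 1) :
    σ ^ 4 ≤
      variance
        (fun N : Fin n → ℝ =>
          ∑ p : {p : Fin n × Fin n // p.1 < p.2},
            u p * (M p.1.1 + N p.1.1) * (M p.1.2 + N p.1.2))
        (Measure.pi fun _ : Fin n => gaussianReal 0 (σ ^ 2).toNNReal) := by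
  have hσ2 : (0:ℝ) < σ ^ 2 := by positivity
  set v : ℝ≥0 := (σ ^ 2).toNNReal with hvdef
  have hv : v ≠ 0 := by
    rw [hvdef]
    exact (Real.toNNReal_pos.mpr hσ2).ne'
  have hvR : (v:ℝ) = σ ^ 2 := Real.coe_toNNReal _ hσ2.le
  set P : Measure (Fin n → ℝ) := Measure.pi fun _ : Fin n => gaussianReal 0 v with hP
  haveI : IsProbabilityMeasure P := by rw [hP]; infer_instance
  have hX : (fun N : Fin n → ℝ =>
        ∑ p : {p : Fin n × Fin n // p.1 < p.2},
          u p * (M p.1.1 + N p.1.1) * (M p.1.2 + N p.1.2))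
      = fun x => ∑ p : {p : Fin n × Fin n // p.1 < p.2}, Tfun M u p x := by
    funext x
    exact Finset.sum_congr rfl fun p _ => by simp only [Tfun]; ring
  rw [hX]
  set X : (Fin n → ℝ) → ℝ := fun x => ∑ p : {p : Fin n × Fin n // p.1 < p.2}, Tfun M u p x
    with hXdef
  have hab : ∀ p : {p : Fin n × Fin n // p.1 < p.2}, p.1.1 ≠ p.1.2 := fun p => ne_of_lt p.2
  -- integrability facts
  have hTint : ∀ p, Integrable (Tfun M u p) P := by
    intro p
    have := (integ_pair hv M p.1.1 p.1.2 (hab p)).const_mul (u p)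
    rw [hP]
    exact this
  have hTTint : ∀ p q, Integrable (fun x => Tfun M u p x * Tfun M u q x) P := by
    intro p q
    have h := (integ_quad hv M (hab p) (hab q)).const_mul (u p * u q)
    rw [hP]
    refine h.congr (Filter.Eventually.of_forall fun x => ?_)
    simp only [Tfun]; ring
  -- Memℒp
  have hXmem : MemLp X 2 P := by
    refine memLp_finset_sum Finset.univ (fun p _ => ?_)
    have hmeas : Measurable (Tfun M u p) := by
      refine Measurable.const_mul ?_ (u p)
      exact (measurable_const.add (measurable_pi_apply _)).mul
        (measurable_const.add (measurable_pi_apply _))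
    refine (memLp_two_iff_integrable_sq hmeas.aestronglyMeasurable).mpr ?_
    have h := (integ_quad hv M (hab p) (hab p)).const_mul (u p ^ 2)
    rw [hP]
    refine h.congr (Filter.Eventually.of_forall fun x => ?_)
    simp only [Tfun]; ring
  -- integrals
  have hIp : ∀ p, ∫ x, Tfun M u p x ∂P = u p * (M p.1.1 * M p.1.2) := by
    intro p
    have h1 : ∫ x, Tfun M u p x ∂P
        = u p * ∫ x, (M p.1.1 + x p.1.1) * (M p.1.2 + x p.1.2) ∂P := by
      simp only [Tfun]
      exact MeasureTheory.integral_const_mul _ _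
    rw [h1, hP, int_pair hv M p.1.1 p.1.2 (hab p)]
  have hK : ∀ p q, ∫ x, Tfun M u p x * Tfun M u q x ∂P
      = u p * u q * (∏ t, Gm v (M t) (E4 p.1.1 p.1.2 q.1.1 q.1.2 t)) := by
    intro p q
    have h1 : (fun x : Fin n → ℝ => Tfun M u p x * Tfun M u q x)
        = fun x => (u p * u q) * ((M p.1.1 + x p.1.1) * (M p.1.2 + x p.1.2) *
            ((M q.1.1 + x q.1.1) * (M q.1.2 + x q.1.2))) := by
      funext x; simp only [Tfun]; ring
    rw [h1, MeasureTheory.integral_const_mul, hP, int_quad hv M]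
  -- covariance
  have hcov : ∀ p q : {p : Fin n × Fin n // p.1 < p.2},
      (∫ x, Tfun M u p x * Tfun M u q x ∂P) - (∫ x, Tfun M u p x ∂P) * (∫ x, Tfun M u q x ∂P)
        = (v:ℝ) * (∑ t, wgt M u t p * wgt M u t q)
          + (if p = q then (v:ℝ)^2 * (u p * u q) else 0) := by
    intro p q
    rw [hK p q, hIp p, hIp q, wgt_sum M u p q]
    have hce := cov_eval hv M p.2 q.2
    have h2 : u p * u q * (∏ t, Gm v (M t) (E4 p.1.1 p.1.2 q.1.1 q.1.2 t))
          - u p * (M p.1.1 * M p.1.2) * (u q * (M q.1.1 * M q.1.2))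
        = u p * u q * ((∏ t, Gm v (M t) (E4 p.1.1 p.1.2 q.1.1 q.1.2 t))
            - (M p.1.1 * M p.1.2) * (M q.1.1 * M q.1.2)) := by ring
    rw [h2, hce]
    rcases eq_or_ne p q with h | h
    · subst h
      rw [if_pos ⟨rfl, rfl⟩, if_pos rfl]
      ring
    · rw [if_neg (fun hc => h (Subtype.ext (Prod.ext hc.1 hc.2))), if_neg h]
      ring
  -- variance as double sum
  have hvar : variance X P
      = ∑ p, ∑ q, ((∫ x, Tfun M u p x * Tfun M u q x ∂P)
          - (∫ x, Tfun M u p x ∂P) * (∫ x, Tfun M u q x ∂P)) := by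
    rw [variance_eq_sub hXmem]
    have h2 : ∫ x, (X ^ 2) x ∂P = ∑ p, ∑ q, ∫ x, Tfun M u p x * Tfun M u q x ∂P := by
      have hfe : (fun x => (X ^ 2) x)
          = fun x => ∑ p, ∑ q, Tfun M u p x * Tfun M u q x := by
        funext x
        show (X x) ^ 2 = _
        rw [hXdef, sq, Finset.sum_mul_sum]
      rw [hfe, integral_finset_sum _ (fun p _ => integrable_finset_sum _ (fun q _ => hTTint p q))]
      exact Finset.sum_congr rfl fun p _ =>
        integral_finset_sum _ (fun q _ => hTTint p q)
    have h3 : ∫ x, X x ∂P = ∑ p, ∫ x, Tfun M u p x ∂P := by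
      rw [hXdef, integral_finset_sum _ (fun p _ => hTint p)]
    rw [h2, h3, sq, Finset.sum_mul_sum, ← Finset.sum_sub_distrib]
    exact Finset.sum_congr rfl fun p _ => by rw [← Finset.sum_sub_distrib]
  rw [hvar]
  have hsum : ∑ p, ∑ q, ((∫ x, Tfun M u p x * Tfun M u q x ∂P)
          - (∫ x, Tfun M u p x ∂P) * (∫ x, Tfun M u q x ∂P))
      = (v:ℝ) * (∑ t, (∑ p, wgt M u t p) ^ 2) + (v:ℝ)^2 * ∑ p, u p ^ 2 := by
    rw [Finset.sum_congr rfl (fun p _ => Finset.sum_congr rfl (fun q _ => hcov p q))]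
    have hsplit : ∑ p, ∑ q, ((v:ℝ) * (∑ t, wgt M u t p * wgt M u t q)
          + (if p = q then (v:ℝ)^2 * (u p * u q) else 0))
        = (∑ p, ∑ q, (v:ℝ) * (∑ t, wgt M u t p * wgt M u t q))
          + ∑ p, ∑ q, (if p = q then (v:ℝ)^2 * (u p * u q) else 0) := by
      rw [← Finset.sum_add_distrib]
      exact Finset.sum_congr rfl fun p _ => by rw [← Finset.sum_add_distrib]
    rw [hsplit]
    have hdiag : ∑ p, ∑ q, (if p = q then (v:ℝ)^2 * (u p * u q) else 0)
        = (v:ℝ)^2 * ∑ p, u p ^ 2 := by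
      rw [Finset.mul_sum]
      refine Finset.sum_congr rfl fun p _ => ?_
      rw [Finset.sum_ite_eq Finset.univ p (fun q => (v:ℝ)^2 * (u p * u q)),
        if_pos (Finset.mem_univ p)]
      ring
    have hoff : ∑ p, ∑ q, (v:ℝ) * (∑ t, wgt M u t p * wgt M u t q)
        = (v:ℝ) * (∑ t, (∑ p, wgt M u t p) ^ 2) := by
      calc ∑ p, ∑ q, (v:ℝ) * (∑ t, wgt M u t p * wgt M u t q)
          = (v:ℝ) * ∑ p, ∑ q, ∑ t, wgt M u t p * wgt M u t q := by
            rw [Finset.mul_sum]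
            exact Finset.sum_congr rfl fun p _ => (Finset.mul_sum _ _ _).symm
        _ = (v:ℝ) * ∑ t, ∑ p, ∑ q, wgt M u t p * wgt M u t q := by
            congr 1
            calc ∑ p, ∑ q, ∑ t, wgt M u t p * wgt M u t q
                = ∑ p, ∑ t, ∑ q, wgt M u t p * wgt M u t q :=
                  Finset.sum_congr rfl fun p _ => Finset.sum_comm
              _ = ∑ t, ∑ p, ∑ q, wgt M u t p * wgt M u t q := Finset.sum_comm
        _ = (v:ℝ) * (∑ t, (∑ p, wgt M u t p) ^ 2) := by
            congr 1
            exact Finset.sum_congr rfl fun t _ => by rw [sq, Finset.sum_mul_sum]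
    rw [hdiag, hoff]
  rw [hsum, hu, mul_one]
  have h1 : (0:ℝ) ≤ (v:ℝ) * (∑ t, (∑ p, wgt M u t p) ^ 2) := by
    apply mul_nonneg (by positivity)
    exact Finset.sum_nonneg fun t _ => sq_nonneg _
  have h2 : ((v:ℝ))^2 = σ ^ 4 := by rw [hvR]; ring
  linarith
end

section
/- Let n, m be positive integers and A ∈ ℝ^{n×m}. Let S₁,…,S_m be mutually independent real random variables, each having a moment generating function finite on all of ℝ. Let η be an ℝ^n-valued random vector, independent of (S₁,…,S_m), which is centered Gaussian: for every v ∈ ℝ^n, ⟨v, η⟩ is a real Gaussian random variable with mean 0 (and some variance depending on v). Let X = A·(S₁,…,S_m)ᵀ + η, and let g : ℝ^n → ℝ be the multivariate cumulant generating function g(t) = log E[exp(⟨t, X⟩)]. Then for every integer ℓ ≥ 3 and all indices i₁,…,i_ℓ ∈ {1,…,n}, the mixed partial derivative ∂^ℓ g / ∂t_{i₁} ⋯ ∂t_{i_ℓ} evaluated at t = 0 equals Σ_{j=1}^m (Π_{k=1}^ℓ A_{i_k, j}) · cum_ℓ(S_j). -/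
open MeasureTheory ProbabilityTheory

open Real Filter Nat
open scoped NNReal ENNReal

section Machinery

variable {Ω : Type*} [MeasurableSpace Ω] {μ : Measure Ω} {X : Ω → ℝ}

lemma pow_mul_exp_bound (k : ℕ) {a b c : ℝ} (hac : a ≤ c) (hcb : c ≤ b) (x : ℝ) :
    |x| ^ k * rexp (c * x) ≤ (k ! : ℝ) * (rexp ((b + 1) * x) + rexp ((a - 1) * x)) := by
  have h2 : |x| ^ k / (k ! : ℝ) ≤ rexp |x| := by
    refine le_trans ?_ (Real.sum_le_exp_of_nonneg (abs_nonneg x) (k + 1))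
    exact Finset.single_le_sum (f := fun i => |x| ^ i / (i ! : ℝ))
      (fun i _ => by positivity) (Finset.self_mem_range_succ k)
  have h1 : |x| ^ k ≤ (k ! : ℝ) * rexp |x| := by
    have hk : (0 : ℝ) < k ! := by exact_mod_cast Nat.factorial_pos k
    calc |x| ^ k = (k ! : ℝ) * (|x| ^ k / (k ! : ℝ)) := by field_simp
    _ ≤ (k ! : ℝ) * rexp |x| := by
        exact mul_le_mul_of_nonneg_left h2 hk.le
  calc |x| ^ k * rexp (c * x) ≤ ((k ! : ℝ) * rexp |x|) * rexp (c * x) :=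
        mul_le_mul_of_nonneg_right h1 (exp_pos _).le
  _ = (k ! : ℝ) * rexp (|x| + c * x) := by rw [mul_assoc, ← Real.exp_add]
  _ ≤ (k ! : ℝ) * (rexp ((b + 1) * x) + rexp ((a - 1) * x)) := by
      have hk : (0 : ℝ) ≤ k ! := by positivity
      refine mul_le_mul_of_nonneg_left ?_ hk
      rcases le_or_gt 0 x with hx | hx
      · have : |x| + c * x ≤ (b + 1) * x := by
          rw [abs_of_nonneg hx]; nlinarith
        exact le_add_of_le_of_nonneg (Real.exp_le_exp.2 this) (exp_pos _).le
      · have : |x| + c * x ≤ (a - 1) * x := by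
          rw [abs_of_neg hx]; nlinarith
        exact le_add_of_nonneg_of_le (exp_pos _).le (Real.exp_le_exp.2 this)

lemma integrable_pow_mul_exp (hX : Measurable X)
    (hmgf : ∀ t : ℝ, Integrable (fun ω => rexp (t * X ω)) μ) (k : ℕ) (t : ℝ) :
    Integrable (fun ω => X ω ^ k * rexp (t * X ω)) μ := by
  have hbound := fun ω => pow_mul_exp_bound k (le_refl t) (le_refl t) (X ω)
  refine Integrable.mono' (((hmgf (t + 1)).add (hmgf (t - 1))).const_mul (k ! : ℝ))
    ((hX.pow_const k).mul ((hX.const_mul t).exp)).aestronglyMeasurable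
    (Filter.Eventually.of_forall fun ω => ?_)
  rw [norm_mul, norm_pow, Real.norm_eq_abs, Real.norm_eq_abs,
    abs_of_pos (exp_pos _)]
  exact hbound ω

lemma hasDerivAt_integral_pow_mul_exp (hX : Measurable X)
    (hmgf : ∀ t : ℝ, Integrable (fun ω => rexp (t * X ω)) μ) (k : ℕ) (t₀ : ℝ) :
    HasDerivAt (fun t => ∫ ω, X ω ^ k * rexp (t * X ω) ∂μ)
      (∫ ω, X ω ^ (k + 1) * rexp (t₀ * X ω) ∂μ) t₀ := by
  refine (hasDerivAt_integral_of_dominated_loc_of_deriv_le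
    (F := fun t ω => X ω ^ k * rexp (t * X ω))
    (F' := fun t ω => X ω ^ (k + 1) * rexp (t * X ω))
    (bound := fun ω => ((k + 1)! : ℝ) * (rexp ((t₀ + 2) * X ω) + rexp ((t₀ - 2) * X ω)))
    (μ := μ) (x₀ := t₀) (Metric.ball_mem_nhds t₀ one_pos)
    (Filter.Eventually.of_forall fun t =>
      ((hX.pow_const k).mul ((hX.const_mul t).exp)).aestronglyMeasurable)
    (integrable_pow_mul_exp hX hmgf k t₀)
    (((hX.pow_const (k + 1)).mul ((hX.const_mul t₀).exp)).aestronglyMeasurable)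
    (Filter.Eventually.of_forall fun ω => fun t ht => ?_)
    (((hmgf (t₀ + 2)).add (hmgf (t₀ - 2))).const_mul _)
    (Filter.Eventually.of_forall fun ω => fun t _ => ?_)).2
  · -- bound
    rw [Real.norm_eq_abs, abs_mul, abs_pow, abs_of_pos (exp_pos _)]
    have h1 : t₀ - 1 + 1 = t₀ := by ring
    have h2 : t₀ + 1 + 1 = t₀ + 2 := by ring
    have h3 : t₀ - 1 - 1 = t₀ - 2 := by ring
    rw [Metric.mem_ball, Real.dist_eq, abs_sub_lt_iff] at ht
    have := pow_mul_exp_bound (k + 1) (a := t₀ - 1) (b := t₀ + 1)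
      (by linarith : t₀ - 1 ≤ t) (by linarith : t ≤ t₀ + 1) (X ω)
    rw [h2, h3] at this
    exact this
  · -- derivative
    have h := (((hasDerivAt_id t).mul_const (X ω)).exp).const_mul (X ω ^ k)
    simp only [id_eq, mul_one] at h
    exact h.congr_deriv (by ring)

lemma contDiff_integral_pow_mul_exp (hX : Measurable X)
    (hmgf : ∀ t : ℝ, Integrable (fun ω => rexp (t * X ω)) μ) (N : ℕ) :
    ∀ k : ℕ, ContDiff ℝ N (fun t => ∫ ω, X ω ^ k * rexp (t * X ω) ∂μ) := by
  induction N with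
  | zero =>
    intro k
    rw [show ((0 : ℕ) : WithTop ℕ∞) = 0 from rfl, contDiff_zero]
    have : Differentiable ℝ (fun t => ∫ ω, X ω ^ k * rexp (t * X ω) ∂μ) :=
      fun t => (hasDerivAt_integral_pow_mul_exp hX hmgf k t).differentiableAt
    exact this.continuous
  | succ N ih =>
    intro k
    rw [show ((N + 1 : ℕ) : WithTop ℕ∞) = (N : WithTop ℕ∞) + 1 by push_cast; rfl,
      contDiff_succ_iff_deriv]
    refine ⟨fun t => (hasDerivAt_integral_pow_mul_exp hX hmgf k t).differentiableAt, ?_, ?_⟩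
    · intro h; exact absurd h (by simp)
    · have : deriv (fun t => ∫ ω, X ω ^ k * rexp (t * X ω) ∂μ)
        = fun t => ∫ ω, X ω ^ (k + 1) * rexp (t * X ω) ∂μ :=
        funext fun t => (hasDerivAt_integral_pow_mul_exp hX hmgf k t).deriv
      rw [this]
      exact ih (k + 1)


lemma contDiff_mgf (hX : Measurable X)
    (hmgf : ∀ t : ℝ, Integrable (fun ω => rexp (t * X ω)) μ) (N : ℕ) :
    ContDiff ℝ N (mgf X μ) := by
  have : mgf X μ = fun t => ∫ ω, X ω ^ 0 * rexp (t * X ω) ∂μ := by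
    funext t
    simp [mgf]
  rw [this]
  exact contDiff_integral_pow_mul_exp hX hmgf N 0

lemma contDiff_cgf [IsProbabilityMeasure μ] (hX : Measurable X)
    (hmgf : ∀ t : ℝ, Integrable (fun ω => rexp (t * X ω)) μ) (N : ℕ) :
    ContDiff ℝ N (cgf X μ) := by
  have : cgf X μ = fun t => Real.log (mgf X μ t) := rfl
  rw [this]
  rw [contDiff_iff_contDiffAt]
  intro t
  exact (Real.contDiffAt_log.2 (mgf_pos (hmgf t)).ne').comp t (contDiff_mgf hX hmgf N).contDiffAt

end Machinery

section Gaussian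

lemma gaussianPDFReal_mul_exp {w : ℝ≥0} (hw : w ≠ 0) (t x : ℝ) :
    gaussianPDFReal 0 w x * rexp (t * x)
      = rexp (w * t ^ 2 / 2) * gaussianPDFReal (t * w) w x := by
  have hw' : (w : ℝ) ≠ 0 := by exact_mod_cast hw
  simp only [gaussianPDFReal, sub_zero]
  rw [mul_assoc, ← Real.exp_add, mul_left_comm, ← Real.exp_add]
  congr 1
  field_simp
  ring

lemma integrable_exp_mul_gaussianReal (w : ℝ≥0) (t : ℝ) :
    Integrable (fun x => rexp (t * x)) (gaussianReal 0 w) := by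
  rcases eq_or_ne w 0 with rfl | hw
  · rw [gaussianReal_zero_var]
    refine ⟨(measurable_id.const_mul t).exp.aestronglyMeasurable, ?_⟩
    rw [HasFiniteIntegral]
    rw [lintegral_dirac' _ (by fun_prop)]
    exact ENNReal.coe_lt_top
  · rw [gaussianReal_of_var_ne_zero _ hw]
    rw [integrable_withDensity_iff (measurable_gaussianPDF 0 w)
      (Filter.Eventually.of_forall fun x => ENNReal.ofReal_lt_top)]
    have : (fun x => rexp (t * x) * (gaussianPDF 0 w x).toReal)
        = fun x => rexp (w * t ^ 2 / 2) * gaussianPDFReal (t * w) w x := by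
      funext x
      rw [gaussianPDF, ENNReal.toReal_ofReal (gaussianPDFReal_nonneg 0 w x), mul_comm,
        gaussianPDFReal_mul_exp hw]
    rw [this]
    exact (integrable_gaussianPDFReal (t * w) w).const_mul _

lemma integral_exp_mul_gaussianReal (w : ℝ≥0) (t : ℝ) :
    ∫ x, rexp (t * x) ∂gaussianReal 0 w = rexp (w * t ^ 2 / 2) := by
  rcases eq_or_ne w 0 with rfl | hw
  · rw [gaussianReal_zero_var, integral_dirac]
    simp
  · rw [gaussianReal_of_var_ne_zero _ hw]
    have hmeas : Measurable fun x => (gaussianPDFReal 0 w x).toNNReal :=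
      (measurable_gaussianPDFReal 0 w).real_toNNReal
    have hpdf : gaussianPDF 0 w = fun x => ((gaussianPDFReal 0 w x).toNNReal : ℝ≥0∞) := by
      funext x; rw [gaussianPDF, ENNReal.ofReal]
    rw [hpdf, integral_withDensity_eq_integral_smul hmeas]
    have : (fun x => (gaussianPDFReal 0 w x).toNNReal • rexp (t * x))
        = fun x => rexp (w * t ^ 2 / 2) * gaussianPDFReal (t * w) w x := by
      funext x
      rw [NNReal.smul_def, Real.coe_toNNReal _ (gaussianPDFReal_nonneg 0 w x), smul_eq_mul,
        gaussianPDFReal_mul_exp hw]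
    rw [this, integral_const_mul, integral_gaussianPDFReal_eq_one _ hw, mul_one]

lemma integrable_sq_gaussianReal (w : ℝ≥0) :
    Integrable (fun x : ℝ => x ^ 2) (gaussianReal 0 w) := by
  have h := integrable_pow_mul_exp (μ := gaussianReal 0 w) (X := id) measurable_id
    (fun t => integrable_exp_mul_gaussianReal w t) 2 0
  simpa using h

lemma integral_sq_gaussianReal (w : ℝ≥0) : ∫ x, x ^ 2 ∂gaussianReal 0 w = w := by
  have hmg : ∀ t : ℝ, Integrable (fun x => rexp (t * x)) (gaussianReal 0 w) :=
    integrable_exp_mul_gaussianReal w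
  have hid : Measurable (id : ℝ → ℝ) := measurable_id
  have hJ0 : (fun t => ∫ x, (id x) ^ 0 * rexp (t * id x) ∂gaussianReal 0 w)
      = fun t => rexp (w * t ^ 2 / 2) := by
    funext t
    simp only [id_eq, pow_zero, one_mul]
    exact integral_exp_mul_gaussianReal w t
  have hg1 : ∀ t : ℝ, HasDerivAt (fun t => rexp ((w : ℝ) * t ^ 2 / 2))
      (((w : ℝ) * t) * rexp ((w : ℝ) * t ^ 2 / 2)) t := by
    intro t
    have h : HasDerivAt (fun t : ℝ => (w : ℝ) * t ^ 2 / 2) ((w : ℝ) * t) t := by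
      have h2 := (hasDerivAt_pow 2 t).const_mul ((w : ℝ) / 2)
      have e : (fun t : ℝ => (w : ℝ) * t ^ 2 / 2) = fun y => (w : ℝ) / 2 * y ^ 2 := by
        funext s; ring
      rw [e]
      exact h2.congr_deriv (by rw [show (2 : ℕ) - 1 = 1 from rfl]; push_cast; ring)
    have h4 := h.exp
    convert h4 using 1
    ring
  have hJ1 : (fun t => ∫ x, (id x) ^ 1 * rexp (t * id x) ∂gaussianReal 0 w)
      = fun t => ((w : ℝ) * t) * rexp ((w : ℝ) * t ^ 2 / 2) := by
    funext t
    have h1 := hasDerivAt_integral_pow_mul_exp hid hmg 0 t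
    rw [hJ0] at h1
    exact ((hg1 t).unique h1).symm
  have h2 := hasDerivAt_integral_pow_mul_exp hid hmg 1 0
  rw [hJ1] at h2
  have hg2 : HasDerivAt (fun t : ℝ => ((w : ℝ) * t) * rexp ((w : ℝ) * t ^ 2 / 2)) (w : ℝ) 0 := by
    have h3 := (((hasDerivAt_id (0 : ℝ)).const_mul (w : ℝ)).mul (hg1 0))
    exact h3.congr_deriv (by simp)
  have hfin := hg2.unique h2
  simp only [id_eq, zero_mul, Real.exp_zero, mul_one] at hfin
  exact hfin.symm

end Gaussian

section Quad

variable {n : ℕ}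

noncomputable def quadCMM (n : ℕ) (b : Fin n → Fin n → ℝ) :
    ContinuousMultilinearMap ℝ (fun _ : Fin 2 => (Fin n → ℝ)) ℝ :=
  ∑ i, ∑ i', (b i i') •
    (ContinuousMultilinearMap.mkPiAlgebra ℝ (Fin 2) ℝ).compContinuousLinearMap
      ![ContinuousLinearMap.proj i, ContinuousLinearMap.proj i']

lemma quadCMM_apply (b : Fin n → Fin n → ℝ) (v : Fin 2 → (Fin n → ℝ)) :
    quadCMM n b v = ∑ i, ∑ i', b i i' * (v 0 i * v 1 i') := by
  rw [quadCMM, ContinuousMultilinearMap.sum_apply]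
  refine Finset.sum_congr rfl fun i _ => ?_
  rw [ContinuousMultilinearMap.sum_apply]
  refine Finset.sum_congr rfl fun i' _ => ?_
  rw [ContinuousMultilinearMap.smul_apply, ContinuousMultilinearMap.compContinuousLinearMap_apply,
    ContinuousMultilinearMap.mkPiAlgebra_apply, Fin.prod_univ_two, smul_eq_mul]
  simp

lemma iteratedFDeriv_quadDiag_eq_zero (b : Fin n → Fin n → ℝ) {ℓ : ℕ} (hℓ : 3 ≤ ℓ)
    (x : Fin n → ℝ) :
    iteratedFDeriv ℝ ℓ (fun t : Fin n → ℝ => quadCMM n b (fun _ => t)) x = 0 := by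
  set D : (Fin n → ℝ) →L[ℝ] (Fin 2 → (Fin n → ℝ)) :=
    ContinuousLinearMap.pi (fun _ => ContinuousLinearMap.id ℝ _) with hD
  have hcomp : (fun t : Fin n → ℝ => quadCMM n b (fun _ => t)) = ⇑(quadCMM n b) ∘ ⇑D := rfl
  rw [hcomp, D.iteratedFDeriv_comp_right ((quadCMM n b).contDiff) x le_top]
  have hzero : iteratedFDeriv ℝ ℓ (⇑(quadCMM n b)) (D x) = 0 := by
    rw [(quadCMM n b).iteratedFDeriv_eq]
    have hemp : IsEmpty (Fin ℓ ↪ Fin 2) := by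
      refine ⟨fun e => ?_⟩
      have := Fintype.card_le_of_embedding e
      simp only [Fintype.card_fin] at this
      omega
    rw [ContinuousMultilinearMap.iteratedFDeriv, Finset.univ_eq_empty, Finset.sum_empty]
  ext v
  rw [ContinuousMultilinearMap.compContinuousLinearMap_apply, hzero]
  simp

lemma contDiff_quadDiag (b : Fin n → Fin n → ℝ) {N : WithTop ℕ∞} :
    ContDiff ℝ N (fun t : Fin n → ℝ => quadCMM n b (fun _ => t)) := by
  have : (fun t : Fin n → ℝ => quadCMM n b (fun _ => t))
      = ⇑(quadCMM n b) ∘ ⇑(ContinuousLinearMap.pi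
          (fun _ : Fin 2 => ContinuousLinearMap.id ℝ (Fin n → ℝ))) := rfl
  rw [this]
  exact ((quadCMM n b).contDiff).comp (ContinuousLinearMap.contDiff _)

lemma deriv_algebra {m : ℕ} (G : Fin m → ℝ → ℝ) (A : Fin n → Fin m → ℝ)
    (b : Fin n → Fin n → ℝ) {ℓ : ℕ} (hℓ : 3 ≤ ℓ) (idx : Fin ℓ → Fin n)
    (hG : ∀ j, ContDiff ℝ ℓ (G j)) :
    iteratedFDeriv ℝ ℓ
      (fun t : Fin n → ℝ => (∑ j, G j (∑ i, t i * A i j)) + quadCMM n b (fun _ => t)) 0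
      (fun k => Pi.single (idx k) (1 : ℝ))
    = ∑ j, (∏ k, A (idx k) j) * iteratedDeriv ℓ (G j) 0 := by
  classical
  set L : Fin m → ((Fin n → ℝ) →L[ℝ] ℝ) :=
    fun j => ∑ i, A i j • ContinuousLinearMap.proj i with hLdef
  have hL : ∀ j (t : Fin n → ℝ), L j t = ∑ i, t i * A i j := by
    intro j t
    rw [hLdef]
    rw [ContinuousLinearMap.sum_apply]
    exact Finset.sum_congr rfl fun i _ => by
      rw [ContinuousLinearMap.smul_apply, ContinuousLinearMap.proj_apply, smul_eq_mul, mul_comm]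
  have hcompCD : ∀ j, ContDiff ℝ ℓ (G j ∘ ⇑(L j)) := fun j => (hG j).comp (L j).contDiff
  have hFeq : (fun t : Fin n → ℝ => (∑ j, G j (∑ i, t i * A i j)) + quadCMM n b (fun _ => t))
      = fun t => (∑ j, (G j ∘ ⇑(L j)) t) + quadCMM n b (fun _ => t) := by
    funext t
    congr 1
    exact Finset.sum_congr rfl fun j _ => by rw [Function.comp_apply, hL]
  rw [hFeq, iteratedFDeriv_add_apply' (ContDiff.sum fun j _ => hcompCD j).contDiffAt (contDiff_quadDiag b).contDiffAt,
    iteratedFDeriv_quadDiag_eq_zero b hℓ, add_zero,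
    iteratedFDeriv_sum (fun j _ => hcompCD j), Finset.sum_apply, ContinuousMultilinearMap.sum_apply]
  refine Finset.sum_congr rfl fun j _ => ?_
  rw [(L j).iteratedFDeriv_comp_right (hG j) 0 le_rfl,
    ContinuousMultilinearMap.compContinuousLinearMap_apply, map_zero]
  have hvec : (fun k => (L j) (Pi.single (idx k) (1 : ℝ)))
      = fun k => (A (idx k) j) • (1 : ℝ) := by
    funext k
    rw [hL]
    simp [Pi.single_apply, ite_mul, Finset.sum_ite_eq']
  rw [hvec, ContinuousMultilinearMap.map_smul_univ, iteratedDeriv_eq_iteratedFDeriv, smul_eq_mul]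

end Quad


theorem cumulant_tensor_structure {Ω : Type*} [MeasurableSpace Ω] (μ : Measure Ω)
    [IsProbabilityMeasure μ] (n m : ℕ) (hn : 0 < n) (hm : 0 < m)
    (A : Fin n → Fin m → ℝ) (S : Fin m → Ω → ℝ) (η : Ω → Fin n → ℝ)
    (hSmeas : ∀ j, Measurable (S j)) (hηmeas : Measurable η)
    (hindS : iIndepFun S μ)
    (hmgf : ∀ (j : Fin m) (t : ℝ), Integrable (fun ω => Real.exp (t * S j ω)) μ)
    (hindη : IndepFun (fun ω => fun j => S j ω) η μ)
    (hgauss : ∀ v : Fin n → ℝ, ∃ varv : NNReal,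
      Measure.map (fun ω => ∑ i, v i * η ω i) μ = gaussianReal 0 varv)
    (ℓ : ℕ) (hℓ : 3 ≤ ℓ) (idx : Fin ℓ → Fin n) :
    iteratedFDeriv ℝ ℓ
        (fun t : Fin n → ℝ =>
          Real.log (∫ ω, Real.exp (∑ i, t i * ((∑ j, A i j * S j ω) + η ω i)) ∂μ))
        0 (fun k => Pi.single (idx k) (1 : ℝ)) =
      ∑ j, (∏ k, A (idx k) j) * iteratedDeriv ℓ (cgf (S j) μ) 0 := by
  classical
  set V : (Fin n → ℝ) → Ω → ℝ := fun t ω => ∑ i, t i * η ω i with hV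
  have hVmeas : ∀ t, Measurable (V t) := fun t =>
    Finset.measurable_sum _ fun i _ => ((measurable_pi_apply i).comp hηmeas).const_mul (t i)
  set vv : (Fin n → ℝ) → ℝ≥0 := fun t => (hgauss t).choose with hvv
  have hmap : ∀ t, Measure.map (V t) μ = gaussianReal 0 (vv t) := fun t => (hgauss t).choose_spec
  have hexpint : ∀ t, Integrable (fun ω => rexp (V t ω)) μ := by
    intro t
    have h1 : Integrable (fun x : ℝ => rexp (1 * x)) (gaussianReal 0 (vv t)) :=
      integrable_exp_mul_gaussianReal _ 1
    simp only [one_mul] at h1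
    rw [← hmap t] at h1
    exact (integrable_map_measure (Continuous.aestronglyMeasurable (by fun_prop))
      (hVmeas t).aemeasurable).mp h1
  have hexpval : ∀ t, ∫ ω, rexp (V t ω) ∂μ = rexp (vv t / 2) := by
    intro t
    have h := integral_exp_mul_gaussianReal (vv t) 1
    rw [← hmap t, integral_map (hVmeas t).aemeasurable
      (Continuous.aestronglyMeasurable (by fun_prop))] at h
    simp only [one_mul, one_pow, mul_one] at h
    exact h
  have hsqint : ∀ t, Integrable (fun ω => (V t ω) ^ 2) μ := by
    intro t
    have h1 : Integrable (fun x : ℝ => x ^ 2) (gaussianReal 0 (vv t)) :=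
      integrable_sq_gaussianReal _
    rw [← hmap t] at h1
    exact (integrable_map_measure (Continuous.aestronglyMeasurable (by fun_prop))
      (hVmeas t).aemeasurable).mp h1
  have hsqval : ∀ t, ∫ ω, (V t ω) ^ 2 ∂μ = vv t := by
    intro t
    have h := integral_sq_gaussianReal (vv t)
    rw [← hmap t, integral_map (hVmeas t).aemeasurable
      (Continuous.aestronglyMeasurable (by fun_prop))] at h
    exact h
  have hVadd : ∀ t₁ t₂ : Fin n → ℝ, V (t₁ + t₂) = fun ω => V t₁ ω + V t₂ ω := by
    intro t₁ t₂
    funext ω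
    simp only [hV, Pi.add_apply, add_mul]
    rw [Finset.sum_add_distrib]
  have hVsingle : ∀ i, V (Pi.single i 1) = fun ω => η ω i := by
    intro i
    funext ω
    simp [hV, Pi.single_apply, ite_mul, Finset.sum_ite_eq']
  have hprodint : ∀ i i', Integrable (fun ω => η ω i * η ω i') μ := by
    intro i i'
    have h1 := hsqint (Pi.single i 1 + Pi.single i' 1)
    rw [hVadd, hVsingle, hVsingle] at h1
    have h2 := hsqint (Pi.single i 1)
    have h3 := hsqint (Pi.single i' 1)
    rw [hVsingle] at h2
    rw [hVsingle] at h3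
    have key : (fun ω => η ω i * η ω i')
        = fun ω => ((η ω i + η ω i') ^ 2 - (η ω i) ^ 2 - (η ω i') ^ 2) / 2 := by
      funext ω; ring
    rw [key]
    exact ((h1.sub h2).sub h3).div_const 2
  set b : Fin n → Fin n → ℝ := fun i i' => (∫ ω, η ω i * η ω i' ∂μ) / 2 with hb
  have hquad : ∀ t, ((vv t : ℝ)) / 2 = quadCMM n b (fun _ => t) := by
    intro t
    rw [quadCMM_apply, ← hsqval t]
    have hexpand : (fun ω => (V t ω) ^ 2)
        = fun ω => ∑ i, ∑ i', (t i * t i') * (η ω i * η ω i') := by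
      funext ω
      rw [hV]
      rw [sq, Finset.sum_mul_sum]
      exact Finset.sum_congr rfl fun i _ => Finset.sum_congr rfl fun i' _ => by ring
    rw [hexpand, integral_finset_sum _ (fun i _ => integrable_finset_sum _
      (fun i' _ => (hprodint i i').const_mul _))]
    rw [Finset.sum_div]
    refine Finset.sum_congr rfl fun i _ => ?_
    rw [integral_finset_sum _ (fun i' _ => (hprodint i i').const_mul _), Finset.sum_div]
    refine Finset.sum_congr rfl fun i' _ => ?_
    rw [integral_const_mul, hb]
    ring
  set c : (Fin n → ℝ) → Fin m → ℝ := fun t j => ∑ i, t i * A i j with hc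
  have hU : ∀ t, ∫ ω, rexp (∑ j, c t j * S j ω) ∂μ = ∏ j, mgf (S j) μ (c t j) := by
    intro t
    set T : Fin m → Ω → ℝ := fun j ω => c t j * S j ω with hT
    have hTmeas : ∀ j, Measurable (T j) := fun j => (hSmeas j).const_mul _
    have hTindep : iIndepFun T μ :=
      hindS.comp _ (fun j => measurable_id.const_mul (c t j))
    have hms := hTindep.mgf_sum hTmeas Finset.univ (t := 1)
    have lhs_eq : mgf (∑ j, T j) μ 1 = ∫ ω, rexp (∑ j, c t j * S j ω) ∂μ := by
      simp only [mgf, one_mul, Finset.sum_apply]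
      rfl
    have rhs_eq : ∀ j, mgf (T j) μ 1 = mgf (S j) μ (c t j) := by
      intro j
      simp only [mgf, hT, one_mul]
    rw [← lhs_eq, hms]
    exact Finset.prod_congr rfl fun j _ => rhs_eq j
  have hindepUV : ∀ t, IndepFun (fun ω => rexp (∑ j, c t j * S j ω))
      (fun ω => rexp (V t ω)) μ := by
    intro t
    have h := hindη.comp
      (show Measurable fun s : Fin m → ℝ => rexp (∑ j, c t j * s j) by fun_prop)
      (show Measurable fun y : Fin n → ℝ => rexp (∑ i, t i * y i) by fun_prop)
    exact h
  have hUint : ∀ t, Integrable (fun ω => rexp (∑ j, c t j * S j ω)) μ := by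
    intro t
    set T : Fin m → Ω → ℝ := fun j ω => c t j * S j ω with hT
    have hTmeas : ∀ j, Measurable (T j) := fun j => (hSmeas j).const_mul _
    have hTindep : iIndepFun T μ :=
      hindS.comp _ (fun j => measurable_id.const_mul (c t j))
    have h := hTindep.integrable_exp_mul_sum (t := 1) (s := Finset.univ) hTmeas
      (fun j _ => by simpa only [one_mul] using hmgf j (c t j))
    simpa only [one_mul, Finset.sum_apply] using h
  have hsplit : ∀ t, ∫ ω, rexp (∑ i, t i * ((∑ j, A i j * S j ω) + η ω i)) ∂μ
      = (∏ j, mgf (S j) μ (c t j)) * rexp (vv t / 2) := by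
    intro t
    have hpoint : (fun ω => rexp (∑ i, t i * ((∑ j, A i j * S j ω) + η ω i)))
        = fun ω => rexp (∑ j, c t j * S j ω) * rexp (V t ω) := by
      funext ω
      rw [← Real.exp_add]
      congr 1
      simp only [mul_add]
      rw [Finset.sum_add_distrib]
      congr 1
      calc ∑ i, t i * (∑ j, A i j * S j ω) = ∑ i, ∑ j, t i * A i j * S j ω := by
            refine Finset.sum_congr rfl fun i _ => ?_
            rw [Finset.mul_sum]
            exact Finset.sum_congr rfl fun j _ => by ring
      _ = ∑ j, ∑ i, t i * A i j * S j ω := Finset.sum_comm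
      _ = ∑ j, c t j * S j ω := Finset.sum_congr rfl fun j _ => (Finset.sum_mul _ _ _).symm
    rw [hpoint]
    have hmul := (hindepUV t).integral_mul_eq_mul_integral
      ((Finset.measurable_sum _ fun j _ => (hSmeas j).const_mul (c t j)).exp).aestronglyMeasurable
      ((hVmeas t).exp).aestronglyMeasurable
    simp only [Pi.mul_def] at hmul
    rw [hmul, hU t, hexpval t]
  have hkey : (fun t : Fin n → ℝ =>
        Real.log (∫ ω, Real.exp (∑ i, t i * ((∑ j, A i j * S j ω) + η ω i)) ∂μ))
      = fun t => (∑ j, cgf (S j) μ (∑ i, t i * A i j)) + quadCMM n b (fun _ => t) := by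
    funext t
    rw [hsplit t]
    have hprodne : (∏ j, mgf (S j) μ (c t j)) ≠ 0 :=
      Finset.prod_ne_zero_iff.2 fun j _ => (mgf_pos (hmgf j (c t j))).ne'
    rw [Real.log_mul hprodne (Real.exp_pos _).ne', Real.log_exp,
      Real.log_prod (fun j _ => (mgf_pos (hmgf j (c t j))).ne'), ← hquad t]
    rfl
  rw [hkey]
  exact deriv_algebra (fun j => cgf (S j) μ) A b hℓ idx
    (fun j => contDiff_cgf (hSmeas j) (hmgf j) ℓ)
end
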